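/- arXiv:2010.04208 — 12 statements merged into one kernel-verified Lean document; each statement's English description precedes it below -/
import Mathlib

section
/- Let k be a field, R = k[x], S = k[x,y]/(y² − x³), with content c defined via the free R-basis {1, y}. Then c(y)² = R but c(y²) = x³R, whose radical is xR ≠ R; hence R → S is not a weak content algebra. -/
/-!
Over a free algebra the Ohm-Rush content of `f` is the ideal generated by the coordinates of `f`
in a basis. Here `S` is free over `R = k[x]` with basis `1, y`, and `y = 0·1 + 1·y` has content
`R`, while `y² = x³·1` has content `x³R`. So `rad c(y·y) = xR` is proper although
`rad (c(y)c(y)) = R`.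
-/

/-- The Ohm-Rush content of `f ∈ S`: the intersection of all ideals `I` of `R`
with `f ∈ IS`. -/
def orContent (R : Type*) [CommRing R] {S : Type*} [CommRing S] [Algebra R S] (f : S) :
    Ideal R :=
  sInf {I : Ideal R | f ∈ I.map (algebraMap R S)}

/-- `S` is an Ohm-Rush `R`-algebra if each `f ∈ S` lies in `c(f)S`,
i.e. there is a minimal ideal `I` with `f ∈ IS`. -/
def IsOhmRush (R S : Type*) [CommRing R] [CommRing S] [Algebra R S] : Prop :=
  ∀ f : S, f ∈ (orContent R f).map (algebraMap R S)

/-- `S` is a McCoy `R`-algebra if whenever `f * g = 0` with `g ≠ 0`,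
some nonzero `r ∈ R` annihilates the content of `f`. -/
def IsMcCoy (R S : Type*) [CommRing R] [CommRing S] [Algebra R S] : Prop :=
  ∀ f g : S, f * g = 0 → g ≠ 0 → ∃ r : R, r ≠ 0 ∧ ∀ a ∈ orContent R f, r * a = 0

/-- `S` is a weak content `R`-algebra: Ohm-Rush and `rad c(fg) = rad (c(f)c(g))`. -/
def IsWeakContent (R S : Type*) [CommRing R] [CommRing S] [Algebra R S] : Prop :=
  IsOhmRush R S ∧ ∀ f g : S,
    (orContent R (f * g)).radical = (orContent R f * orContent R g).radical

/-- Property (A): every finitely generated ideal consisting of zero-divisors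
has a nonzero annihilator. -/
def HasPropertyA (R : Type*) [CommRing R] : Prop :=
  ∀ J : Ideal R, J.FG → (∀ a ∈ J, a ∉ nonZeroDivisors R) →
    ∃ r : R, r ≠ 0 ∧ ∀ a ∈ J, a * r = 0

/-- Fidel (A): every quotient has property (A). -/
def HasFidelA (R : Type*) [CommRing R] : Prop :=
  ∀ I : Ideal R, HasPropertyA (R ⧸ I)

/-- `S` is a semicontent `R`-algebra: faithfully flat, Ohm-Rush, and for every
multiplicative set `W ⊆ R` meeting `c(f)`, `c(fg)` and `c(g)` agree after
localizing at `W`. -/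
def IsSemicontent (R S : Type*) [CommRing R] [CommRing S] [Algebra R S] : Prop :=
  Module.FaithfullyFlat R S ∧ IsOhmRush R S ∧
    ∀ (W : Submonoid R) (f g : S), (∃ w ∈ W, w ∈ orContent R f) →
      (orContent R (f * g)).map (algebraMap R (Localization W)) =
        (orContent R g).map (algebraMap R (Localization W))

theorem Module.Basis.mem_ideal_map_algebraMap_iff {R S ι : Type*} [CommRing R] [CommRing S]
    [Algebra R S] (b : Module.Basis ι R S) (I : Ideal R) (f : S) :
    f ∈ I.map (algebraMap R S) ↔ ∀ i, b.repr f i ∈ I := by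
  rw [← Submodule.restrictScalars_mem R, ← Ideal.smul_top_eq_map]
  constructor
  · intro hf i
    have hle : I • (⊤ : Submodule R S) ≤
        Submodule.comap ((Finsupp.lapply i).comp b.repr.toLinearMap) I := by
      rw [Submodule.smul_le]
      intro r hr n _
      simpa only [Submodule.mem_comap, LinearMap.comp_apply, LinearEquiv.coe_toLinearMap,
        map_smul, Finsupp.lapply_apply, Finsupp.smul_apply, smul_eq_mul]
        using I.mul_mem_right _ hr
    exact hle hf
  · intro hf
    rw [← b.linearCombination_repr f, Finsupp.linearCombination_apply, Finsupp.sum]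
    exact Submodule.sum_mem _ fun i _ => Submodule.smul_mem_smul (hf i) trivial

theorem orContent_eq_span_range_repr {R S ι : Type*} [CommRing R] [CommRing S] [Algebra R S]
    (b : Module.Basis ι R S) (f : S) :
    orContent R f = Ideal.span (Set.range (b.repr f)) := by
  have hmem : ∀ I : Ideal R, f ∈ I.map (algebraMap R S) ↔ Ideal.span (Set.range (b.repr f)) ≤ I :=
    fun I => by
      rw [b.mem_ideal_map_algebraMap_iff, Ideal.span_le, Set.range_subset_iff]
      rfl
  exact le_antisymm (sInf_le ((hmem _).2 le_rfl)) (le_sInf fun I hI => (hmem I).1 hI)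

theorem orContent_smul_basis {R S ι : Type*} [CommRing R] [CommRing S] [Algebra R S]
    (b : Module.Basis ι R S) (i : ι) (r : R) :
    orContent R (r • b i) = Ideal.span {r} := by
  classical
  rw [orContent_eq_span_range_repr b, map_smul, b.repr_self, Finsupp.smul_single_one]
  apply le_antisymm
  · rw [Ideal.span_le]
    refine (Finsupp.range_single_subset).trans (Set.insert_subset_iff.2 ⟨?_, ?_⟩)
    · exact Submodule.zero_mem _
    · exact Set.singleton_subset_iff.2 (Ideal.mem_span_singleton_self r)
  · exact Ideal.span_mono (Set.singleton_subset_iff.2 ⟨i, Finsupp.single_eq_same⟩)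

open Polynomial in
theorem AdjoinRoot.orContent_smul_root_pow {R : Type*} [CommRing R] {g : R[X]} (hg : g.Monic)
    {i : ℕ} (hi : i < g.natDegree) (r : R) :
    orContent R (r • root g ^ i) = Ideal.span {r} := by
  simpa only [(powerBasis' hg).basis_eq_pow, powerBasis'_gen]
    using orContent_smul_basis (powerBasis' hg).basis ⟨i, hi⟩ r

theorem not_isWeakContent_of_orContent_eq_top {R S : Type*} [CommRing R] [CommRing S]
    [Algebra R S] {f : S} (hf : orContent R f = ⊤) (hf2 : (orContent R (f ^ 2)).radical ≠ ⊤) :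
    ¬ IsWeakContent R S := fun ⟨_, h⟩ => hf2 <| by
  rw [sq, h, hf, Ideal.mul_top, Ideal.radical_top]

open Polynomial in
/-- For `R = k[x]` and `S = k[x,y]/(y² - x³)`, with `ȳ` the image of `y` in `S`:
`c(ȳ)² = R` whereas `c(ȳ²) = x³R`, whose radical is the proper ideal `xR`;
hence `R → S` is not a weak content algebra. -/
theorem stmt_2 (k : Type*) [Field k] :
    (orContent (Polynomial k)
        (Ideal.Quotient.mk
          (Ideal.span {X ^ 2 - C (X ^ 3)} : Ideal (Polynomial (Polynomial k))) X)) ^ 2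
      = ⊤ ∧
    orContent (Polynomial k)
        ((Ideal.Quotient.mk
          (Ideal.span {X ^ 2 - C (X ^ 3)} : Ideal (Polynomial (Polynomial k))) X) ^ 2)
      = Ideal.span {(X : Polynomial k) ^ 3} ∧
    (Ideal.span {(X : Polynomial k) ^ 3}).radical = Ideal.span {(X : Polynomial k)} ∧
    Ideal.span {(X : Polynomial k)} ≠ ⊤ ∧
    ¬ IsWeakContent (Polynomial k)
        (Polynomial (Polynomial k) ⧸
          (Ideal.span {X ^ 2 - C (X ^ 3)} : Ideal (Polynomial (Polynomial k)))) := by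
  set p : (Polynomial k)[X] := X ^ 2 - C (X ^ 3)
  have hp : p.Monic := monic_X_pow_sub (degree_C_le.trans_lt (by norm_num))
  have hdeg : p.natDegree = 2 := natDegree_X_pow_sub_C
  -- `AdjoinRoot p` is by definition `k[X][X] ⧸ Ideal.span {p}`, with `root p` the class of `X`.
  have hy : orContent (Polynomial k) (Ideal.Quotient.mk (Ideal.span {p}) X) = ⊤ := by
    have := AdjoinRoot.orContent_smul_root_pow hp (i := 1) (by omega) 1
    rwa [one_smul, pow_one, Ideal.span_singleton_one] at this
  have hy_sq : AdjoinRoot.root p ^ 2 = (X ^ 3 : Polynomial k) • AdjoinRoot.root p ^ 0 := by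
    rw [pow_zero, Algebra.smul_def, mul_one, ← sub_eq_zero]
    simpa [p] using AdjoinRoot.mk_self (f := p)
  have hy2 : orContent (Polynomial k) (Ideal.Quotient.mk (Ideal.span {p}) X ^ 2) =
      Ideal.span {X ^ 3} := by
    have := AdjoinRoot.orContent_smul_root_pow hp (i := 0) (by omega) (X ^ 3)
    rwa [← hy_sq] at this
  have hrad : (Ideal.span {(X : Polynomial k) ^ 3}).radical = Ideal.span {X} := by
    rw [← Ideal.span_singleton_pow, Ideal.radical_pow _ (by norm_num : 3 ≠ 0)]
    exact ((Ideal.span_singleton_prime X_ne_zero).2 prime_X).radical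
  have hX : Ideal.span {(X : Polynomial k)} ≠ ⊤ := fun h =>
    not_isUnit_X (Ideal.span_singleton_eq_top.1 h)
  refine ⟨by rw [show _ = ⊤ from hy, Ideal.top_pow], hy2, hrad, hX, ?_⟩
  exact not_isWeakContent_of_orContent_eq_top hy (by rwa [hy2, hrad])
end

section
/- Let R → S be an Ohm-Rush algebra. If for every prime ideal p of R the induced algebra R/p → S/pS is McCoy, then for every prime p of R, pS = S or pS is a prime ideal of S (i.e., R → S is a weak content algebra). -/
/-- If `R → S` is Ohm-Rush and `R/p → S/pS` is McCoy for every prime `p` of `R`,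
then for every prime `p`, `pS = S` or `pS` is prime (i.e. `R → S` is a weak
content algebra). -/
theorem stmt_3 (R S : Type*) [CommRing R] [CommRing S] [Algebra R S]
    (hOR : IsOhmRush R S)
    (hMc : ∀ p : Ideal R, p.IsPrime →
      IsMcCoy (R ⧸ p) (S ⧸ p.map (algebraMap R S))) :
    ∀ p : Ideal R, p.IsPrime →
      p.map (algebraMap R S) = ⊤ ∨ (p.map (algebraMap R S)).IsPrime := by
  intro p hp
  set P := p.map (algebraMap R S) with hP
  by_cases hT : P = ⊤
  · exact Or.inl hT
  right
  haveI : IsDomain (R ⧸ p) := Ideal.Quotient.isDomain p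
  have hcomp : (algebraMap (R ⧸ p) (S ⧸ P)).comp (Ideal.Quotient.mk p)
      = (Ideal.Quotient.mk P).comp (algebraMap R S) := by
    ext r
    rfl
  have hM : ∀ f : S, (orContent R f).map (Ideal.Quotient.mk p)
      ≤ orContent (R ⧸ p) (Ideal.Quotient.mk P f) := by
    intro f
    refine le_sInf fun I hI' => ?_
    have hI : Ideal.Quotient.mk P f ∈ I.map (algebraMap (R ⧸ p) (S ⧸ P)) := hI'
    have hIs : (I.comap (Ideal.Quotient.mk p)).map (Ideal.Quotient.mk p) = I :=
      Ideal.map_comap_of_surjective _ Ideal.Quotient.mk_surjective I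
    have h2 : I.map (algebraMap (R ⧸ p) (S ⧸ P))
        = ((I.comap (Ideal.Quotient.mk p)).map (algebraMap R S)).map (Ideal.Quotient.mk P) := by
      conv_lhs => rw [← hIs]
      rw [Ideal.map_map, Ideal.map_map, hcomp]
    rw [h2] at hI
    obtain ⟨y, hy, hyf⟩ :=
      (Ideal.mem_map_iff_of_surjective _ Ideal.Quotient.mk_surjective).mp hI
    have hfy : y - f ∈ P := Ideal.Quotient.eq.mp hyf
    have hPle : P ≤ (I.comap (Ideal.Quotient.mk p)).map (algebraMap R S) := by
      refine Ideal.map_mono fun x hx => ?_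
      have hx0 : Ideal.Quotient.mk p x = 0 := Ideal.Quotient.eq_zero_iff_mem.mpr hx
      simp [Ideal.mem_comap, hx0]
    have hfmem : f ∈ (I.comap (Ideal.Quotient.mk p)).map (algebraMap R S) := by
      have : f = y - (y - f) := by ring
      rw [this]
      exact sub_mem hy (hPle hfy)
    have hcle : orContent R f ≤ I.comap (Ideal.Quotient.mk p) := sInf_le hfmem
    calc (orContent R f).map (Ideal.Quotient.mk p)
        ≤ (I.comap (Ideal.Quotient.mk p)).map (Ideal.Quotient.mk p) := Ideal.map_mono hcle
      _ = I := hIs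
  refine ⟨hT, fun {f g} hfg => ?_⟩
  by_contra hc
  push_neg at hc
  obtain ⟨hf, hg⟩ := hc
  obtain ⟨r, hr0, hr⟩ := hMc p hp (Ideal.Quotient.mk P f) (Ideal.Quotient.mk P g)
    (by rw [← map_mul]; exact Ideal.Quotient.eq_zero_iff_mem.mpr hfg)
    (by simpa [Ideal.Quotient.eq_zero_iff_mem] using hg)
  have hbot : (orContent R f).map (Ideal.Quotient.mk p) ≤ ⊥ := by
    intro a ha
    have := hr a (hM f ha)
    exact (mul_eq_zero.mp this).resolve_left hr0
  have hmem : Ideal.Quotient.mk P f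
      ∈ ((orContent R f).map (algebraMap R S)).map (Ideal.Quotient.mk P) :=
    Ideal.mem_map_of_mem _ (hOR f)
  have h3 : ((orContent R f).map (algebraMap R S)).map (Ideal.Quotient.mk P)
      = ((orContent R f).map (Ideal.Quotient.mk p)).map (algebraMap (R ⧸ p) (S ⧸ P)) := by
    rw [Ideal.map_map, Ideal.map_map, hcomp]
  rw [h3] at hmem
  have : Ideal.Quotient.mk P f ∈ ((⊥ : Ideal (R ⧸ p)).map (algebraMap (R ⧸ p) (S ⧸ P))) :=
    Ideal.map_mono hbot hmem
  rw [Ideal.map_bot] at this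
  exact hf (Ideal.Quotient.eq_zero_iff_mem.mp this)
end

section
/- Let R → S be an Ohm-Rush algebra. Then R → S is a weak content algebra if and only if R/I → S/IS is McCoy for every radical ideal I of R, if and only if R/p → S/pS is McCoy for every prime ideal p of R. -/
section Aux

variable {R S : Type*} [CommRing R] [CommRing S] [Algebra R S] (I : Ideal R)

private lemma quot_mem_map_iff (K' : Ideal (R ⧸ I)) (f : S) :
    Ideal.Quotient.mk (I.map (algebraMap R S)) f ∈
      K'.map (algebraMap (R ⧸ I) (S ⧸ I.map (algebraMap R S))) ↔
      f ∈ (K'.comap (Ideal.Quotient.mk I)).map (algebraMap R S) := by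
  set K := K'.comap (Ideal.Quotient.mk I) with hKdef
  have hK' : K' = K.map (Ideal.Quotient.mk I) :=
    (Ideal.map_comap_of_surjective _ Ideal.Quotient.mk_surjective K').symm
  have hcomm : (algebraMap (R ⧸ I) (S ⧸ I.map (algebraMap R S))).comp (Ideal.Quotient.mk I)
      = (Ideal.Quotient.mk (I.map (algebraMap R S))).comp (algebraMap R S) := rfl
  have hmap : K'.map (algebraMap (R ⧸ I) (S ⧸ I.map (algebraMap R S)))
      = (K.map (algebraMap R S)).map (Ideal.Quotient.mk (I.map (algebraMap R S))) := by
    rw [hK', Ideal.map_map, hcomm, ← Ideal.map_map]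
  have hIK : I ≤ K := by
    intro x hx
    simp [hKdef, Ideal.mem_comap, Ideal.Quotient.eq_zero_iff_mem.mpr hx]
  rw [hmap, Ideal.mem_quotient_iff_mem_sup,
    sup_eq_left.mpr (Ideal.map_mono hIK)]

private lemma content_quot_ge (f : S) :
    (orContent R f).map (Ideal.Quotient.mk I) ≤
      orContent (R ⧸ I) (Ideal.Quotient.mk (I.map (algebraMap R S)) f) := by
  refine le_sInf fun K' hK' => ?_
  have hf : f ∈ (K'.comap (Ideal.Quotient.mk I)).map (algebraMap R S) :=
    (quot_mem_map_iff I K' f).mp hK'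
  have : orContent R f ≤ K'.comap (Ideal.Quotient.mk I) := sInf_le hf
  exact le_trans (Ideal.map_mono this) Ideal.map_comap_le

private lemma content_quot_le (hOR : IsOhmRush R S) (f : S) :
    orContent (R ⧸ I) (Ideal.Quotient.mk (I.map (algebraMap R S)) f) ≤
      (orContent R f ⊔ I).map (Ideal.Quotient.mk I) := by
  have key : Ideal.Quotient.mk (I.map (algebraMap R S)) f ∈
      (((orContent R f ⊔ I)).map (Ideal.Quotient.mk I)).map
        (algebraMap (R ⧸ I) (S ⧸ I.map (algebraMap R S))) := by
    rw [quot_mem_map_iff]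
    refine Ideal.map_mono ?_ (Ideal.map_mono (le_sup_left (b := I)) (hOR f))
    intro x hx
    exact Ideal.mem_comap.mpr (Ideal.mem_map_of_mem (Ideal.Quotient.mk I) hx)
  exact sInf_le key

private lemma content_le_of_mem (f : S) (K : Ideal R) (hf : f ∈ K.map (algebraMap R S)) :
    orContent R f ≤ K := sInf_le hf

end Aux

/-- For an Ohm-Rush algebra `R → S`: `R → S` is a weak content algebra iff
`R/I → S/IS` is McCoy for every radical ideal `I`, iff `R/p → S/pS` is McCoy
for every prime ideal `p`. -/
theorem stmt_4 (R S : Type*) [CommRing R] [CommRing S] [Algebra R S]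
    (hOR : IsOhmRush R S) :
    (IsWeakContent R S ↔
      ∀ I : Ideal R, I.IsRadical → IsMcCoy (R ⧸ I) (S ⧸ I.map (algebraMap R S))) ∧
    (IsWeakContent R S ↔
      ∀ p : Ideal R, p.IsPrime → IsMcCoy (R ⧸ p) (S ⧸ p.map (algebraMap R S))) := by
  have hAB : IsWeakContent R S →
      ∀ I : Ideal R, I.IsRadical → IsMcCoy (R ⧸ I) (S ⧸ I.map (algebraMap R S)) := by
    rintro ⟨-, hWC⟩ I hI f' g' hfg hg
    obtain ⟨f, rfl⟩ := Ideal.Quotient.mk_surjective f'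
    obtain ⟨g, rfl⟩ := Ideal.Quotient.mk_surjective g'
    -- fg ∈ IS
    have hfgI : f * g ∈ I.map (algebraMap R S) := by
      rw [← Ideal.Quotient.eq_zero_iff_mem, map_mul]; exact hfg
    have h1 : orContent R (f * g) ≤ I := content_le_of_mem _ _ hfgI
    have h2 : orContent R f * orContent R g ≤ I := by
      rw [← hI.radical_le_iff, ← hWC f g, hI.radical_le_iff]
      exact h1
    -- pick r ∈ c(g) \ I
    have hgI : ¬ orContent R g ≤ I := by
      intro hle
      exact hg (Ideal.Quotient.eq_zero_iff_mem.mpr (Ideal.map_mono hle (hOR g)))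
    obtain ⟨r, hrg, hrI⟩ := SetLike.not_le_iff_exists.mp hgI
    refine ⟨Ideal.Quotient.mk I r, by simpa [Ideal.Quotient.eq_zero_iff_mem] using hrI, ?_⟩
    intro a ha
    have ha' : a ∈ (orContent R f ⊔ I).map (Ideal.Quotient.mk I) :=
      content_quot_le I hOR f ha
    obtain ⟨b, hb, rfl⟩ := Ideal.mem_map_iff_of_surjective _ Ideal.Quotient.mk_surjective |>.mp ha'
    rw [← map_mul, Ideal.Quotient.eq_zero_iff_mem]
    obtain ⟨c, hc, d, hd, rfl⟩ := Submodule.mem_sup.mp hb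
    have h2' : orContent R g * orContent R f ≤ I := by rwa [mul_comm] at h2
    have : r * c ∈ I := h2' (Ideal.mul_mem_mul hrg hc)
    have : r * d ∈ I := I.mul_mem_left r hd
    rw [mul_add]
    exact Ideal.add_mem _ ‹r * c ∈ I› this
  have hBC : (∀ I : Ideal R, I.IsRadical → IsMcCoy (R ⧸ I) (S ⧸ I.map (algebraMap R S))) →
      ∀ p : Ideal R, p.IsPrime → IsMcCoy (R ⧸ p) (S ⧸ p.map (algebraMap R S)) :=
    fun h p hp => h p hp.isRadical
  have hCA : (∀ p : Ideal R, p.IsPrime → IsMcCoy (R ⧸ p) (S ⧸ p.map (algebraMap R S))) →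
      IsWeakContent R S := by
    intro hMc
    refine ⟨hOR, fun f g => ?_⟩
    have hle : orContent R (f * g) ≤ orContent R f * orContent R g := by
      refine content_le_of_mem _ _ ?_
      rw [Ideal.map_mul]
      exact Ideal.mul_mem_mul (hOR f) (hOR g)
    refine le_antisymm (Ideal.radical_mono hle) ?_
    rw [Ideal.radical_le_radical_iff, Ideal.radical_eq_sInf]
    refine le_sInf fun p ⟨hcp, hp⟩ => ?_
    rw [hp.mul_le]
    by_cases hg : orContent R g ≤ p
    · exact Or.inr hg
    · left
      have hgne : Ideal.Quotient.mk (p.map (algebraMap R S)) g ≠ 0 := by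
        rw [Ne, Ideal.Quotient.eq_zero_iff_mem]
        exact fun hgp => hg (content_le_of_mem _ _ hgp)
      have hfg0 : Ideal.Quotient.mk (p.map (algebraMap R S)) f *
          Ideal.Quotient.mk (p.map (algebraMap R S)) g = 0 := by
        rw [← map_mul, Ideal.Quotient.eq_zero_iff_mem]
        exact Ideal.map_mono hcp (hOR (f * g))
      obtain ⟨r', hr'ne, hr'⟩ := hMc p hp _ _ hfg0 hgne
      obtain ⟨r, rfl⟩ := Ideal.Quotient.mk_surjective r'
      have hrp : r ∉ p := fun h => hr'ne (Ideal.Quotient.eq_zero_iff_mem.mpr h)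
      intro b hb
      have hmem : Ideal.Quotient.mk p b ∈
          orContent (R ⧸ p) (Ideal.Quotient.mk (p.map (algebraMap R S)) f) :=
        content_quot_ge p f (Ideal.mem_map_of_mem _ hb)
      have := hr' _ hmem
      rw [← map_mul, Ideal.Quotient.eq_zero_iff_mem] at this
      exact (hp.mem_or_mem this).resolve_left hrp
  have hA : IsWeakContent R S ↔
      ∀ I : Ideal R, I.IsRadical → IsMcCoy (R ⧸ I) (S ⧸ I.map (algebraMap R S)) :=
    ⟨hAB, fun h => hCA (hBC h)⟩
  exact ⟨hA, ⟨fun h => hBC (hA.mp h), hCA⟩⟩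
end

section
/- Every residually McCoy Ohm-Rush algebra is a weak content algebra. -/
/-- Every residually McCoy Ohm-Rush algebra is a weak content algebra. -/
theorem stmt_5 (R S : Type*) [CommRing R] [CommRing S] [Algebra R S]
    (hOR : IsOhmRush R S)
    (hres : ∀ I : Ideal R, IsMcCoy (R ⧸ I) (S ⧸ I.map (algebraMap R S))) :
    IsWeakContent R S := by
  refine ⟨hOR, fun f g => le_antisymm ?_ ?_⟩
  · have h1 : orContent R (f * g) ≤ orContent R f :=
      sInf_le (Ideal.mul_mem_right g _ (hOR f))
    have h2 : orContent R (f * g) ≤ orContent R g := by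
      refine sInf_le (show f * g ∈ (orContent R g).map (algebraMap R S) from ?_)
      rw [mul_comm]; exact Ideal.mul_mem_right f _ (hOR g)
    rw [Ideal.radical_mul]
    exact le_inf (Ideal.radical_mono h1) (Ideal.radical_mono h2)
  · have key : orContent R f * orContent R g ≤ (orContent R (f * g)).radical := by
      rw [Ideal.radical_eq_sInf]
      refine le_sInf ?_
      rintro p ⟨hple, hp⟩
      set πS := Ideal.Quotient.mk (p.map (algebraMap R S)) with hπS
      have hfg0 : πS f * πS g = 0 := by
        rw [← map_mul, Ideal.Quotient.eq_zero_iff_mem]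
        exact Ideal.map_mono hple (hOR (f * g))
      by_cases hg : πS g = 0
      · have hcg : orContent R g ≤ p := sInf_le (Ideal.Quotient.eq_zero_iff_mem.mp hg)
        exact Ideal.mul_le.mpr fun a ha b hb => Ideal.mul_mem_left _ a (hcg hb)
      · obtain ⟨r, hr0, hann⟩ := hres p (πS f) (πS g) hfg0 hg
        obtain ⟨r, rfl⟩ := Ideal.Quotient.mk_surjective r
        have hrp : r ∉ p := fun h => hr0 (Ideal.Quotient.eq_zero_iff_mem.mpr h)
        have hcf : orContent R f ≤ p := by
          intro a ha
          have hmem : Ideal.Quotient.mk p a ∈ orContent (R ⧸ p) (πS f) := by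
            refine Ideal.mem_sInf.mpr ?_
            rintro J hJ
            replace hJ : πS f ∈ J.map (algebraMap (R ⧸ p) (S ⧸ p.map (algebraMap R S))) := hJ
            set K := J.comap (Ideal.Quotient.mk p) with hK
            have hJK : J = K.map (Ideal.Quotient.mk p) :=
              (Ideal.map_comap_of_surjective _ Ideal.Quotient.mk_surjective J).symm
            have hpK : p ≤ K := fun x hx => by
              show Ideal.Quotient.mk p x ∈ J
              rw [Ideal.Quotient.eq_zero_iff_mem.mpr hx]; exact J.zero_mem
            have hcomp : ((algebraMap (R ⧸ p) (S ⧸ p.map (algebraMap R S))).comp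
                (Ideal.Quotient.mk p)) = (πS : S →+* _).comp (algebraMap R S) := by
              ext x; rfl
            have hfmem : πS f ∈ (K.map (algebraMap R S)).map (πS : S →+* _) := by
              rw [hJK, Ideal.map_map, hcomp, ← Ideal.map_map] at hJ
              exact hJ
            have hfK : f ∈ K.map (algebraMap R S) := by
              obtain ⟨x, hx, hxf⟩ :=
                (Ideal.mem_map_iff_of_surjective _ Ideal.Quotient.mk_surjective).mp hfmem
              have : f - x ∈ p.map (algebraMap R S) := by
                rw [← Ideal.Quotient.eq_zero_iff_mem, map_sub, hxf, sub_self]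
              have hsub : f - x ∈ K.map (algebraMap R S) := Ideal.map_mono hpK this
              have := Ideal.add_mem _ hsub hx
              rwa [sub_add_cancel] at this
            have hle : orContent R f ≤ K := sInf_le hfK
            rw [hJK]
            exact Ideal.mem_map_of_mem _ (hle ha)
          have h0 := hann _ hmem
          rw [← map_mul, Ideal.Quotient.eq_zero_iff_mem] at h0
          exact (hp.mem_or_mem h0).resolve_left hrp
        exact Ideal.mul_le.mpr fun a ha b hb => Ideal.mul_mem_right b _ (hcf ha)
    calc (orContent R f * orContent R g).radical
        ≤ (orContent R (f * g)).radical.radical := Ideal.radical_mono key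
      _ = (orContent R (f * g)).radical := Ideal.radical_idem _
end

section
/- Let R → S be a flat Ohm-Rush algebra and W ⊆ R a multiplicative set consisting of regular elements (non-zero-divisors). If R → S is McCoy, then W⁻¹R → W⁻¹S is McCoy. -/
/-!
Write `f' = f / s` with `f ∈ S`. A zero-divisor relation `f' g' = 0`, `g' ≠ 0` in `W⁻¹S` clears
denominators to `f g = 0`, `g ≠ 0` in `S`, so the McCoy property of `R → S` gives `r ≠ 0`
killing `c(f)`. Since `c(f') ⊆ c(f) W⁻¹R` (Ohm-Rush), `r / 1` kills `c(f')`, and it is nonzero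
because `W` consists of regular elements.
-/

section Content

variable {R S : Type*} [CommRing R] [CommRing S] [Algebra R S]

theorem orContent_le_of_mem_map {I : Ideal R} {f : S} (h : f ∈ I.map (algebraMap R S)) :
    orContent R f ≤ I :=
  sInf_le h

theorem orContent_mul_le_left (f g : S) : orContent R (f * g) ≤ orContent R f :=
  le_sInf fun _ hI => orContent_le_of_mem_map (Ideal.mul_mem_right g _ hI)

theorem IsOhmRush.orContent_algebraMap_le (hOR : IsOhmRush R S) {R' T : Type*} [CommRing R']
    [CommRing T] [Algebra R R'] [Algebra R' T] [Algebra S T] [Algebra R T]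
    [IsScalarTower R R' T] [IsScalarTower R S T] (f : S) :
    orContent R' (algebraMap S T f) ≤ (orContent R f).map (algebraMap R R') := by
  apply orContent_le_of_mem_map
  rw [Ideal.map_map, ← IsScalarTower.algebraMap_eq, IsScalarTower.algebraMap_eq R S T,
    ← Ideal.map_map]
  exact Ideal.mem_map_of_mem _ (hOR f)

end Content

theorem Ideal.map_mul_eq_zero_of_mem_map {R R' : Type*} [CommRing R] [CommRing R'] (φ : R →+* R')
    {I : Ideal R} {r : R} (hr : ∀ a ∈ I, r * a = 0) {b : R'} (hb : b ∈ I.map φ) :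
    φ r * b = 0 := by
  have hbot : Ideal.span {φ r} * I.map φ ≤ ⊥ := by
    rw [← Set.image_singleton, ← Ideal.map_span, ← Ideal.map_mul, ← Ideal.map_bot (f := φ)]
    exact Ideal.map_mono (Ideal.span_singleton_mul_le_iff.mpr fun a ha => hr a ha)
  exact Ideal.span_singleton_mul_le_iff.mp hbot b hb

theorem IsLocalization.exists_mul_eq_zero_of_algebraMap_mul_eq_zero {S : Type*} [CommRing S]
    (M : Submonoid S) (Sₘ : Type*) [CommRing Sₘ] [Algebra S Sₘ] [IsLocalization M Sₘ] {f : S}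
    {g' : Sₘ} (h : algebraMap S Sₘ f * g' = 0) (hg : g' ≠ 0) : ∃ g : S, f * g = 0 ∧ g ≠ 0 := by
  obtain ⟨⟨g, t⟩, hgt⟩ := IsLocalization.surj M g'
  have hfg : algebraMap S Sₘ (f * g) = 0 := by
    rw [map_mul, ← hgt, ← mul_assoc, h, zero_mul]
  obtain ⟨m, hm⟩ := (IsLocalization.map_eq_zero_iff M Sₘ _).mp hfg
  refine ⟨m * g, by rw [mul_left_comm, hm], fun hmg => hg ?_⟩
  have hg0 : algebraMap S Sₘ g = 0 := by
    rw [← (IsLocalization.map_units Sₘ m).mul_right_eq_zero, ← map_mul, hmg, map_zero]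
  rwa [← hgt, (IsLocalization.map_units Sₘ t).mul_left_eq_zero] at hg0

theorem IsMcCoy.localization {R S : Type*} [CommRing R] [CommRing S] [Algebra R S]
    (hOR : IsOhmRush R S) (hMc : IsMcCoy R S) {W : Submonoid R} (hW : W ≤ nonZeroDivisors R)
    (Rₘ Sₘ : Type*) [CommRing Rₘ] [CommRing Sₘ] [Algebra R Rₘ] [IsLocalization W Rₘ]
    [Algebra S Sₘ] [IsLocalization (Algebra.algebraMapSubmonoid S W) Sₘ] [Algebra Rₘ Sₘ]
    [Algebra R Sₘ] [IsScalarTower R Rₘ Sₘ] [IsScalarTower R S Sₘ] :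
    IsMcCoy Rₘ Sₘ := by
  intro f' g' hfg hg
  obtain ⟨⟨f, s⟩, rfl⟩ := IsLocalization.mk'_surjective (Algebra.algebraMapSubmonoid S W) f'
  have hfg' : algebraMap S Sₘ f * g' = 0 := by
    rw [← IsLocalization.mk'_spec Sₘ f s, mul_right_comm, hfg, zero_mul]
  obtain ⟨g, hfg0, hg0⟩ := IsLocalization.exists_mul_eq_zero_of_algebraMap_mul_eq_zero
    (Algebra.algebraMapSubmonoid S W) Sₘ hfg' hg
  obtain ⟨r, hr0, hr⟩ := hMc f g hfg0 hg0
  have hc : orContent Rₘ (IsLocalization.mk' Sₘ f s) ≤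
      (orContent R f).map (algebraMap R Rₘ) := by
    rw [IsLocalization.mk'_eq_mul_mk'_one]
    exact (orContent_mul_le_left _ _).trans (hOR.orContent_algebraMap_le f)
  exact ⟨algebraMap R Rₘ r, (map_ne_zero_iff _ (IsLocalization.injective Rₘ hW)).mpr hr0,
    fun a ha => Ideal.map_mul_eq_zero_of_mem_map _ hr (hc ha)⟩

theorem stmt_6_general (R S : Type*) [CommRing R] [CommRing S] [Algebra R S]
    (hOR : IsOhmRush R S)
    (W : Submonoid R) (hW : W ≤ nonZeroDivisors R)
    (hMc : IsMcCoy R S) :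
    letI := localizationAlgebra W S (Rₘ := Localization W)
      (Sₘ := Localization (Algebra.algebraMapSubmonoid S W))
    IsMcCoy (Localization W) (Localization (Algebra.algebraMapSubmonoid S W)) :=
  hMc.localization hOR hW _ _

/-- If `R → S` is a flat Ohm-Rush algebra, `W ⊆ R` a multiplicative set of
regular elements, and `R → S` is McCoy, then `W⁻¹R → W⁻¹S` is McCoy. -/
theorem stmt_6 (R S : Type*) [CommRing R] [CommRing S] [Algebra R S]
    [Module.Flat R S] (hOR : IsOhmRush R S)
    (W : Submonoid R) (hW : W ≤ nonZeroDivisors R)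
    (hMc : IsMcCoy R S) :
    letI := localizationAlgebra W S (Rₘ := Localization W)
      (Sₘ := Localization (Algebra.algebraMapSubmonoid S W))
    IsMcCoy (Localization W) (Localization (Algebra.algebraMapSubmonoid S W)) :=
  stmt_6_general R S hOR W hW hMc
end

section
/- Let R → S be a flat Ohm-Rush algebra and W ⊆ R a multiplicative set of regular elements. If W⁻¹R → W⁻¹S is McCoy, then R → S is McCoy. -/
/-!
Flatness makes the elements of `W` regular on `S`, so `S ↪ W⁻¹S` and `g ≠ 0` stays nonzero there;
it also gives `(IS : w) = (I : w)S`, from which `W⁻¹c(f) ⊆ c(f/1)`. A nonzero `r/w ∈ W⁻¹R`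
killing `c(f/1)` therefore kills `c(f)/1`, i.e. `m r c(f) = 0` for some `m ∈ W`, and `m` is
regular, so `r c(f) = 0`.
-/

open TensorProduct
open scoped nonZeroDivisors

section Flat

variable {R S : Type*} [CommRing R] [CommRing S] [Algebra R S]

theorem Ideal.rid_lTensor_subtype_mem_map (K : Ideal R) (z : S ⊗[R] K) :
    TensorProduct.rid R S (LinearMap.lTensor S K.subtype z) ∈ K.map (algebraMap R S) := by
  induction z with
  | zero => simp
  | tmul s k =>
    simpa [Algebra.smul_def] using Ideal.mul_mem_right s _ (Ideal.mem_map_of_mem _ k.2)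
  | add x y hx hy => simpa only [map_add] using add_mem hx hy

theorem Ideal.mem_map_colon_of_mul_mem_map [Module.Flat R S] {I : Ideal R} {w : R} {f : S}
    (h : algebraMap R S w * f ∈ I.map (algebraMap R S)) :
    f ∈ (I.colon (Ideal.span {w})).map (algebraMap R S) := by
  let φ : R →ₗ[R] R ⧸ I := I.mkQ ∘ₗ LinearMap.mulLeft R w
  have hker : LinearMap.ker φ = I.colon (Ideal.span {w}) := by
    ext a
    simp only [φ, LinearMap.mem_ker, LinearMap.comp_apply, LinearMap.mulLeft_apply,
      Submodule.mkQ_apply, Ideal.Quotient.mk_eq_mk, Ideal.Quotient.eq_zero_iff_mem,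
      Ideal.mem_colon_span_singleton, mul_comm]
  have hf : LinearMap.lTensor S φ (f ⊗ₜ 1) = 0 := by
    apply (Algebra.TensorProduct.quotIdealMapEquivTensorQuot S I).symm.injective
    simp only [φ, LinearMap.lTensor_tmul, LinearMap.comp_apply, LinearMap.mulLeft_apply,
      mul_one, Submodule.mkQ_apply, Ideal.Quotient.mk_eq_mk, map_zero,
      Algebra.TensorProduct.quotIdealMapEquivTensorQuot_symm_tmul]
    rwa [Ideal.Quotient.eq_zero_iff_mem, Algebra.smul_def]
  -- tensor the exact sequence `0 → (I : w) → R → R ⧸ I` with the flat module `S`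
  obtain ⟨z, hz⟩ := (Module.Flat.lTensor_exact S (LinearMap.exact_subtype_ker_map φ) _).1 hf
  rw [← hker]
  simpa [hz] using Ideal.rid_lTensor_subtype_mem_map (LinearMap.ker φ) z

theorem Module.Flat.algebraMap_mem_nonZeroDivisors [Module.Flat R S] {w : R} (hw : w ∈ R⁰) :
    algebraMap R S w ∈ S⁰ :=
  isRegular_iff_mem_nonZeroDivisors.1 <| isLeftRegular_iff_isRegular.1 <|
    ((isSMulRegular_algebraMap_iff S).2 (isSMulRegular_of_nonZeroDivisors hw)).isLeftRegular

theorem Module.Flat.algebraMap_injective_of_le_nonZeroDivisors [Module.Flat R S]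
    {W : Submonoid R} (hW : W ≤ R⁰) (Sₘ : Type*) [CommRing Sₘ] [Algebra S Sₘ]
    [IsLocalization (Algebra.algebraMapSubmonoid S W) Sₘ] :
    Function.Injective (algebraMap S Sₘ) :=
  IsLocalization.injective Sₘ (M := Algebra.algebraMapSubmonoid S W) <| by
    rintro _ ⟨w, hw, rfl⟩
    exact algebraMap_mem_nonZeroDivisors (hW hw)

end Flat

section Localization

variable {R S : Type*} [CommRing R] [CommRing S] [Algebra R S] (W : Submonoid R)
  {Rₘ Sₘ : Type*} [CommRing Rₘ] [CommRing Sₘ] [Algebra R Rₘ] [IsLocalization W Rₘ]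
  [Algebra S Sₘ] [IsLocalization (Algebra.algebraMapSubmonoid S W) Sₘ]
  [Algebra Rₘ Sₘ] [Algebra R Sₘ] [IsScalarTower R Rₘ Sₘ] [IsScalarTower R S Sₘ]

include W in
theorem map_orContent_le_orContent_algebraMap [Module.Flat R S] (f : S) :
    (orContent R f).map (algebraMap R Rₘ) ≤ orContent Rₘ (algebraMap S Sₘ f) := by
  refine Ideal.map_le_iff_le_comap.2 fun a ha ↦ Submodule.mem_sInf.2 fun J hJ ↦ ?_
  set I := Ideal.comap (algebraMap R Rₘ) J
  have hfI : algebraMap S Sₘ f ∈ (I.map (algebraMap R S)).map (algebraMap S Sₘ) := by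
    rwa [Ideal.map_map, ← IsScalarTower.algebraMap_eq, IsScalarTower.algebraMap_eq R Rₘ Sₘ,
      ← Ideal.map_map, IsLocalization.map_under W Rₘ]
  obtain ⟨_, ⟨w, hw, rfl⟩, hwf⟩ :=
    (IsLocalization.algebraMap_mem_map_algebraMap_iff (Algebra.algebraMapSubmonoid S W) Sₘ
      _ f).1 hfI
  have haw : a * w ∈ I :=
    Ideal.mem_colon_span_singleton.1 <|
      Submodule.mem_sInf.1 ha _ (Ideal.mem_map_colon_of_mul_mem_map hwf)
  rw [Ideal.mem_comap, map_mul] at haw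
  exact (Ideal.mul_unit_mem_iff_mem J (IsLocalization.map_units Rₘ ⟨w, hw⟩)).1 haw

end Localization

theorem stmt_7_general (R S : Type*) [CommRing R] [CommRing S] [Algebra R S]
    [Module.Flat R S]
    (W : Submonoid R) (hW : W ≤ nonZeroDivisors R)
    (hMc :
      letI := localizationAlgebra W S (Rₘ := Localization W)
        (Sₘ := Localization (Algebra.algebraMapSubmonoid S W))
      IsMcCoy (Localization W) (Localization (Algebra.algebraMapSubmonoid S W))) :
    IsMcCoy R S := by
  intro f g hfg hg
  let Sₘ := Localization (Algebra.algebraMapSubmonoid S W)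
  have hinj := Module.Flat.algebraMap_injective_of_le_nonZeroDivisors (S := S) hW Sₘ
  obtain ⟨r', hr'0, hr'⟩ := hMc (algebraMap S Sₘ f) (algebraMap S Sₘ g)
    (by rw [← map_mul, hfg, map_zero]) ((map_ne_zero_iff _ hinj).2 hg)
  obtain ⟨⟨r, w⟩, rfl⟩ := IsLocalization.mk'_surjective W r'
  refine ⟨r, fun hr ↦ hr'0 (by simp [hr]), fun a ha ↦ ?_⟩
  have hra := hr' _ (map_orContent_le_orContent_algebraMap W f (Ideal.mem_map_of_mem _ ha))
  rw [mul_comm, IsLocalization.mul_mk'_eq_mk'_of_mul, IsLocalization.mk'_eq_zero_iff] at hra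
  obtain ⟨m, hm⟩ := hra
  rw [mul_comm a] at hm
  exact (mem_nonZeroDivisors_iff_left.1 (hW m.2)) _ hm

/-- If `R → S` is a flat Ohm-Rush algebra, `W ⊆ R` a multiplicative set of
regular elements, and `W⁻¹R → W⁻¹S` is McCoy, then `R → S` is McCoy. -/
theorem stmt_7 (R S : Type*) [CommRing R] [CommRing S] [Algebra R S]
    [Module.Flat R S] (hOR : IsOhmRush R S)
    (W : Submonoid R) (hW : W ≤ nonZeroDivisors R)
    (hMc :
      letI := localizationAlgebra W S (Rₘ := Localization W)
        (Sₘ := Localization (Algebra.algebraMapSubmonoid S W))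
      IsMcCoy (Localization W) (Localization (Algebra.algebraMapSubmonoid S W))) :
    IsMcCoy R S :=
  stmt_7_general R S W hW hMc
end

section
/- Let R → S be a flat Ohm-Rush algebra such that for every maximal ideal m of R, the localization R_m → S_m (localizing S at R∖m) is McCoy. Then R → S is McCoy. -/
section AuxContent

variable {R S : Type*} [CommRing R] [CommRing S] [Algebra R S]

lemma orContent_le {f : S} {I : Ideal R} (h : f ∈ I.map (algebraMap R S)) :
    orContent R f ≤ I := sInf_le h

lemma orContent_fg (hOR : IsOhmRush R S) (f : S) : (orContent R f).FG := by
  classical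
  have h := hOR f
  rw [Ideal.map, Ideal.span] at h
  obtain ⟨T, hTsub, hTmem⟩ := Submodule.mem_span_finite_of_mem_span h
  have hch : ∀ y : {x // x ∈ T}, ∃ b : R, b ∈ orContent R f ∧ algebraMap R S b = y := by
    rintro ⟨y, hy⟩
    obtain ⟨b, hb, hb'⟩ := hTsub hy
    exact ⟨b, hb, hb'⟩
  choose c hc1 hc2 using hch
  refine ⟨T.attach.image c, le_antisymm ?_ ?_⟩
  · rw [Finset.coe_image]
    exact Ideal.span_le.2 fun b hb => by
      obtain ⟨y, _, rfl⟩ := hb; exact hc1 y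
  · refine orContent_le ?_
    rw [Ideal.map_span]
    refine Submodule.span_mono ?_ hTmem
    intro y hy
    exact ⟨c ⟨y, hy⟩, by simp [Finset.coe_image], hc2 ⟨y, hy⟩⟩

end AuxContent

open TensorProduct in
lemma flat_colon_smul {R : Type*} {M : Type*} [CommRing R] [AddCommGroup M] [Module R M]
    [Module.Flat R M] (I : Ideal R) (w : R) {m : M}
    (h : w • m ∈ I • (⊤ : Submodule R M)) :
    m ∈ (I.colon (Ideal.span {w})) • (⊤ : Submodule R M) := by
  set J := I.colon (Ideal.span {w}) with hJdef
  have hJI : ∀ r : R, r ∈ J ↔ w * r ∈ I := fun r => by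
    rw [hJdef, Ideal.mem_colon_span_singleton, mul_comm]
  let φ : (R ⧸ J) →ₗ[R] (R ⧸ I) :=
    Submodule.mapQ _ _ (LinearMap.lsmul R R w)
      (fun r hr => by simpa [smul_eq_mul] using (hJI r).mp hr)
  have hφmk : ∀ r : R, φ (Submodule.Quotient.mk r) = Submodule.Quotient.mk (w * r) := by
    intro r
    rw [Submodule.mapQ_apply]
    simp [smul_eq_mul]
  have hφ : Function.Injective φ := by
    rw [← LinearMap.ker_eq_bot, eq_bot_iff]
    rintro x hx
    obtain ⟨r, rfl⟩ := Submodule.Quotient.mk_surjective J x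
    rw [LinearMap.mem_ker, hφmk, Submodule.Quotient.mk_eq_zero] at hx
    rw [Submodule.mem_bot, Submodule.Quotient.mk_eq_zero]
    exact (hJI r).mpr hx
  have inj2 : Function.Injective (LinearMap.lTensor M φ) :=
    Module.Flat.lTensor_preserves_injective_linearMap φ hφ
  have key : (tensorQuotEquivQuotSMul M I) (LinearMap.lTensor M φ
      ((tensorQuotEquivQuotSMul M J).symm (Submodule.Quotient.mk m))) =
      Submodule.Quotient.mk (w • m) := by
    rw [tensorQuotEquivQuotSMul_symm_mk, LinearMap.lTensor_tmul]
    have h1 : (1 : R ⧸ J) = Submodule.Quotient.mk 1 := rfl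
    rw [h1, hφmk, mul_one]
    exact tensorQuotEquivQuotSMul_tmul_mk I m w
  have hz : (tensorQuotEquivQuotSMul M I) (LinearMap.lTensor M φ
      ((tensorQuotEquivQuotSMul M J).symm (Submodule.Quotient.mk m))) = 0 := by
    rw [key, Submodule.Quotient.mk_eq_zero]
    exact h
  have hmk : (Submodule.Quotient.mk m : M ⧸ (J • (⊤ : Submodule R M))) = 0 := by
    apply (tensorQuotEquivQuotSMul M J).symm.injective
    apply inj2
    apply (tensorQuotEquivQuotSMul M I).injective
    rw [hz]
    simp
  rwa [Submodule.Quotient.mk_eq_zero] at hmk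

lemma flat_colon_map {R S : Type*} [CommRing R] [CommRing S] [Algebra R S]
    [Module.Flat R S] (I : Ideal R) (w : R) {f : S}
    (h : algebraMap R S w * f ∈ I.map (algebraMap R S)) :
    f ∈ (I.colon (Ideal.span {w})).map (algebraMap R S) := by
  have h' : w • f ∈ I • (⊤ : Submodule R S) := by
    rw [Ideal.smul_top_eq_map, Submodule.restrictScalars_mem]
    rwa [Algebra.smul_def]
  have h2 := flat_colon_smul I w h'
  rwa [Ideal.smul_top_eq_map, Submodule.restrictScalars_mem] at h2

lemma mccoy_gen {R S : Type*} [CommRing R] [CommRing S] [Algebra R S]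
    [Module.Flat R S] (hOR : IsOhmRush R S) (P : Submonoid R)
    [Algebra (Localization P) (Localization (Algebra.algebraMapSubmonoid S P))]
    (hcomm : (algebraMap (Localization P)
          (Localization (Algebra.algebraMapSubmonoid S P))).comp
        (algebraMap R (Localization P)) =
      (algebraMap S (Localization (Algebra.algebraMapSubmonoid S P))).comp (algebraMap R S))
    (hMc : IsMcCoy (Localization P) (Localization (Algebra.algebraMapSubmonoid S P)))
    {f g : S} (hfg : f * g = 0) {a : R} (hag : a ∈ orContent R g)
    (hPa : ∀ w ∈ P, w * a ≠ 0) :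
    ∃ r : R, r ≠ 0 ∧ ∀ b ∈ orContent R f, r * b = 0 := by
  classical
  have hg' : algebraMap S (Localization (Algebra.algebraMapSubmonoid S P)) g ≠ 0 := by
    intro h0
    obtain ⟨t, ht⟩ := (IsLocalization.map_eq_zero_iff (Algebra.algebraMapSubmonoid S P)
      (Localization (Algebra.algebraMapSubmonoid S P)) g).mp h0
    obtain ⟨w, hwP, hwt⟩ := t.2
    rw [← hwt] at ht
    have hwg : algebraMap R S w * g ∈ ((⊥ : Ideal R).map (algebraMap R S)) := by
      rw [ht]; exact Submodule.zero_mem _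
    have h2 := orContent_le (flat_colon_map (⊥ : Ideal R) w hwg)
    have h3 : a * w = 0 := by
      have := h2 hag
      rwa [Ideal.mem_colon_span_singleton, Ideal.mem_bot] at this
    exact hPa w hwP (by rwa [mul_comm] at h3)
  have hfg' : algebraMap S (Localization (Algebra.algebraMapSubmonoid S P)) f *
      algebraMap S (Localization (Algebra.algebraMapSubmonoid S P)) g = 0 := by
    rw [← map_mul, hfg, map_zero]
  obtain ⟨r', hr'0, hr'⟩ := hMc _ _ hfg' hg'
  have hkey : ∀ b ∈ orContent R f,
      algebraMap R (Localization P) b ∈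
        orContent (Localization P)
          (algebraMap S (Localization (Algebra.algebraMapSubmonoid S P)) f) := by
    intro b hb
    rw [orContent]
    refine Submodule.mem_sInf.2 fun (J : Ideal (Localization P)) hJ => ?_
    have hJ2 : (J.comap (algebraMap R (Localization P))).map
        (algebraMap R (Localization P)) = J :=
      IsLocalization.map_comap P (Localization P) J
    set I := J.comap (algebraMap R (Localization P)) with hIdef
    have hf' : algebraMap S (Localization (Algebra.algebraMapSubmonoid S P)) f ∈
        (I.map (algebraMap R S)).map
          (algebraMap S (Localization (Algebra.algebraMapSubmonoid S P))) := by
      rw [Ideal.map_map, ← hcomm, ← Ideal.map_map, hJ2]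
      exact hJ
    rw [IsLocalization.mem_map_algebraMap_iff (Algebra.algebraMapSubmonoid S P)
      (Localization (Algebra.algebraMapSubmonoid S P))] at hf'
    obtain ⟨⟨x, t⟩, hxt⟩ := hf'
    have heq : algebraMap S (Localization (Algebra.algebraMapSubmonoid S P)) (f * t) =
        algebraMap S (Localization (Algebra.algebraMapSubmonoid S P)) x := by
      rw [map_mul]; exact hxt
    obtain ⟨c, hc⟩ := (IsLocalization.eq_iff_exists (Algebra.algebraMapSubmonoid S P)
      (Localization (Algebra.algebraMapSubmonoid S P))).mp heq
    obtain ⟨w, hwP, hwct⟩ := (c * t).2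
    have hwf : algebraMap R S w * f ∈ I.map (algebraMap R S) := by
      have hct : algebraMap R S w = (c : S) * (t : S) := by
        rw [hwct]; rfl
      rw [hct, mul_assoc, mul_comm (t : S) f, hc]
      exact Ideal.mul_mem_left _ _ x.2
    have h2 := orContent_le (flat_colon_map I w hwf)
    have hbw : b * w ∈ I := by
      have := h2 hb
      rwa [Ideal.mem_colon_span_singleton] at this
    have hbwJ : algebraMap R (Localization P) (b * w) ∈ J := hbw
    obtain ⟨u, hu⟩ := IsLocalization.map_units (Localization P) (⟨w, hwP⟩ : P)
    have hsplit : algebraMap R (Localization P) b =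
        (↑u⁻¹ : Localization P) * algebraMap R (Localization P) (b * w) := by
      rw [map_mul, ← hu, ← mul_assoc, mul_comm ((↑u⁻¹ : Localization P)), mul_assoc]
      simp
    rw [hsplit]
    exact J.mul_mem_left _ hbwJ
  obtain ⟨⟨r, s⟩, hrs⟩ := IsLocalization.surj P r'
  obtain ⟨T, hT⟩ := orContent_fg hOR f
  have h7 : ∀ b : {x // x ∈ T}, ∃ u : R, u ∈ P ∧ u * (r * b) = 0 := by
    rintro ⟨b, hbT⟩
    have hb : (b : R) ∈ orContent R f := by
      rw [← hT]; exact Ideal.subset_span hbT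
    have h8 : r' * algebraMap R (Localization P) b = 0 := hr' _ (hkey b hb)
    have h9 : algebraMap R (Localization P) (r * b) = 0 := by
      rw [map_mul, ← hrs, mul_assoc, mul_comm (algebraMap R (Localization P) s),
        ← mul_assoc, h8, zero_mul]
    obtain ⟨u, hu⟩ := (IsLocalization.map_eq_zero_iff P (Localization P) _).mp h9
    exact ⟨u, u.2, hu⟩
  choose u hu1 hu2 using h7
  set U := ∏ b ∈ T.attach, u b with hU
  have hUP : U ∈ P := Submonoid.prod_mem P fun b _ => hu1 b
  refine ⟨U * r, ?_, ?_⟩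
  · intro h0
    have h1 : algebraMap R (Localization P) U * algebraMap R (Localization P) r = 0 := by
      rw [← map_mul, h0, map_zero]
    have hUu := IsLocalization.map_units (Localization P) (⟨U, hUP⟩ : P)
    have hr0 : algebraMap R (Localization P) r = 0 := hUu.mul_right_eq_zero.mp h1
    have hsu := IsLocalization.map_units (Localization P) s
    rw [← hrs] at hr0
    exact hr'0 (hsu.mul_left_eq_zero.mp hr0)
  · intro b hb
    have hle : orContent R f ≤ (⊥ : Ideal R).colon (Ideal.span {U * r}) := by
      rw [← hT, Ideal.span_le]
      intro x hx
      rw [SetLike.mem_coe, Ideal.mem_colon_span_singleton, Ideal.mem_bot]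
      obtain ⟨V, hV⟩ := Finset.dvd_prod_of_mem u (Finset.mem_attach T ⟨x, hx⟩)
      have hxe : x * (U * r) = V * (u ⟨x, hx⟩ * (r * x)) := by rw [hU, hV]; ring
      rw [hxe, hu2 ⟨x, hx⟩, mul_zero]
    have hcb := hle hb
    rw [Ideal.mem_colon_span_singleton, Ideal.mem_bot] at hcb
    rw [mul_comm] at hcb
    exact hcb

/-- If `R → S` is a flat Ohm-Rush algebra such that `R_m → S_m` is McCoy for
every maximal ideal `m` of `R`, then `R → S` is McCoy. -/
theorem stmt_8 (R S : Type*) [CommRing R] [CommRing S] [Algebra R S]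
    [Module.Flat R S] (hOR : IsOhmRush R S)
    (hloc : ∀ (m : Ideal R) (hm : m.IsMaximal),
      haveI := hm.isPrime
      letI := localizationAlgebra m.primeCompl S (Rₘ := Localization m.primeCompl)
        (Sₘ := Localization (Algebra.algebraMapSubmonoid S m.primeCompl))
      IsMcCoy (Localization m.primeCompl)
        (Localization (Algebra.algebraMapSubmonoid S m.primeCompl))) :
    IsMcCoy R S := by
  intro f g hfg hg
  have hcg : orContent R g ≠ ⊥ := by
    intro h0
    apply hg
    have hmem := hOR g
    rw [h0, Ideal.map_bot] at hmem
    simpa using hmem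
  obtain ⟨a, hag, ha0⟩ := Submodule.exists_mem_ne_zero_of_ne_bot hcg
  have hA : (⊥ : Ideal R).colon (Ideal.span {a}) ≠ ⊤ := by
    intro ht
    have h1 : (1 : R) ∈ (⊥ : Ideal R).colon (Ideal.span {a}) := ht ▸ Submodule.mem_top
    rw [Ideal.mem_colon_span_singleton, one_mul, Ideal.mem_bot] at h1
    exact ha0 h1
  obtain ⟨m, hm, hAm⟩ := Ideal.exists_le_maximal _ hA
  haveI := hm.isPrime
  letI : Algebra (Localization m.primeCompl)
      (Localization (Algebra.algebraMapSubmonoid S m.primeCompl)) :=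
    localizationAlgebra m.primeCompl S
  refine mccoy_gen hOR m.primeCompl ?_ ?_ hfg hag ?_
  · exact IsLocalization.map_comp (M := m.primeCompl) (S := Localization m.primeCompl)
      (Q := Localization (Algebra.algebraMapSubmonoid S m.primeCompl))
      (g := algebraMap R S)
      (show m.primeCompl ≤ (Algebra.algebraMapSubmonoid S m.primeCompl).comap (algebraMap R S)
        from m.primeCompl.le_comap_map)
  · exact hloc m hm
  · intro w hwP hwa
    apply hwP
    apply hAm
    rw [Ideal.mem_colon_span_singleton, Ideal.mem_bot]
    exact hwa
end

section
/- If R has property (A) and W ⊆ R is a multiplicative set of regular elements, then W⁻¹R has property (A). -/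
/- Clear denominators: a finite generating set of an ideal `J` of `W⁻¹R`, multiplied by a common
denominator, comes from a finitely generated ideal `I` of `R` with `IW⁻¹R = J`. Elements regular in
`R` stay regular in `W⁻¹R`, so `I` consists of zero-divisors; a nonzero `r` annihilating `I` then
annihilates `J`, and stays nonzero in `W⁻¹R` because `W` consists of regular elements. -/

open scoped Pointwise

theorem IsLocalization.exists_fg_map_eq {R : Type*} [CommRing R] (M : Submonoid R) {S : Type*}
    [CommRing S] [Algebra R S] [IsLocalization M S] {J : Ideal S} (hJ : J.FG) :
    ∃ I : Ideal R, I.FG ∧ I.map (algebraMap R S) = J := by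
  classical
  obtain ⟨s, rfl⟩ := hJ
  refine ⟨Ideal.span (finsetIntegerMultiple M s), ⟨_, rfl⟩, ?_⟩
  have hc : commonDenomOfFinset M s • (s : Set S) =
      algebraMap R S (commonDenomOfFinset M s) • (s : Set S) := by
    ext
    simp [Set.mem_smul_set, Submonoid.smul_def, Algebra.smul_def]
  rw [Ideal.map_span, finsetIntegerMultiple_image, hc]
  exact Submodule.span_smul_eq_of_isUnit _ _ (map_units S _)

theorem Ideal.mul_map_eq_zero_of_forall_mul_eq_zero {R S : Type*} [CommRing R] [CommRing S]
    (f : R →+* S) {I : Ideal R} {r : R} (hr : ∀ a ∈ I, a * r = 0) {b : S} (hb : b ∈ I.map f) :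
    b * f r = 0 := by
  have hle : I.map f ≤ (Ideal.span {f r}).annihilator := by
    refine Ideal.map_le_iff_le_comap.mpr fun a ha => ?_
    simp [← map_mul, hr a ha]
  simpa [Submodule.mem_annihilator_span_singleton] using hle hb

/-- If `R` has property (A) and `W ⊆ R` is a multiplicative set of regular
elements, then `W⁻¹R` has property (A). -/
theorem stmt_11 (R : Type*) [CommRing R]
    (hA : HasPropertyA R) (W : Submonoid R) (hW : W ≤ nonZeroDivisors R) :
    HasPropertyA (Localization W) := by
  intro J hJ hJzd
  obtain ⟨I, hI, rfl⟩ := IsLocalization.exists_fg_map_eq W hJ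
  have hIzd : ∀ a ∈ I, a ∉ nonZeroDivisors R := fun a ha hreg =>
    hJzd _ (Ideal.mem_map_of_mem _ ha) (IsLocalization.nonZeroDivisors_le_comap W _ hreg)
  obtain ⟨r, hr0, hr⟩ := hA I hI hIzd
  refine ⟨algebraMap R _ r, (map_ne_zero_iff _ (IsLocalization.injective _ hW)).mpr hr0, ?_⟩
  exact fun b hb => Ideal.mul_map_eq_zero_of_forall_mul_eq_zero _ hr hb
end

section
/- Every zero-dimensional commutative ring has property (A). -/
/-!
A finitely generated ideal `J` of zero-divisors is proper, so it lies in a maximal ideal `m`, which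
in a zero-dimensional ring is a minimal prime. Localized at a minimal prime every element of `m`
is nilpotent, so each generator of `J` has a power killed by some element outside `m`; the product
`x` of these elements is nonzero and `J ^ k x = 0` for some `k`. Descending from `x` along the
powers of `J` we reach a nonzero element killed by `J` itself.
-/

section

variable {R : Type*} [CommRing R]

theorem exists_notMem_mul_pow_eq_zero_of_mem_minimalPrimes {p : Ideal R}
    (hp : p ∈ minimalPrimes R) {a : R} (ha : a ∈ p) : ∃ s ∉ p, ∃ n : ℕ, s * a ^ n = 0 := by
  have := hp.1.1
  have : Ring.KrullDimLE 0 (Localization.AtPrime p) := .of_isLocalization p hp _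
  obtain ⟨n, hn⟩ : IsNilpotent (algebraMap R (Localization.AtPrime p) a) :=
    Ring.KrullDimLE.isNilpotent_iff_mem_maximalIdeal.mpr
      ((IsLocalization.AtPrime.to_map_mem_maximal_iff _ p a).mpr ha)
  rw [← map_pow, IsLocalization.map_eq_zero_iff p.primeCompl] at hn
  obtain ⟨⟨s, hs⟩, hsa⟩ := hn
  exact ⟨s, hs, n, hsa⟩

theorem Ideal.FG.exists_notMem_le_radical_annihilator {p J : Ideal R}
    (hp : p ∈ minimalPrimes R) (hJ : J.FG) (hJp : J ≤ p) :
    ∃ x ∉ p, J ≤ (R ∙ x).annihilator.radical := by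
  classical
  have := hp.1.1
  obtain ⟨g, rfl⟩ := hJ
  choose! s hs n hsn using fun a (ha : a ∈ g) ↦
    exists_notMem_mul_pow_eq_zero_of_mem_minimalPrimes hp (hJp (Ideal.subset_span ha))
  refine ⟨∏ a ∈ g, s a, p.primeCompl.prod_mem hs, Ideal.span_le.mpr fun a ha ↦ ⟨n a, ?_⟩⟩
  rw [Submodule.mem_annihilator_span_singleton, smul_eq_mul,
    ← Finset.mul_prod_erase g s ha, ← mul_assoc, mul_comm (a ^ n a), hsn a ha, zero_mul]

theorem Ideal.exists_ne_zero_forall_mul_eq_zero_of_pow_le_annihilator {J : Ideal R} {k : ℕ}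
    {x : R} (hx : x ≠ 0) (hk : J ^ k ≤ (R ∙ x).annihilator) : ∃ r ≠ 0, ∀ a ∈ J, a * r = 0 := by
  induction k generalizing x with
  | zero =>
    have h1 := (Submodule.mem_annihilator_span_singleton x 1).mp (hk (by simp))
    rw [one_smul] at h1
    exact absurd h1 hx
  | succ k ih =>
    by_cases hJx : ∀ a ∈ J, a * x = 0
    · exact ⟨x, hx, hJx⟩
    push Not at hJx
    obtain ⟨b, hb, hbx⟩ := hJx
    refine ih hbx fun a ha ↦ (Submodule.mem_annihilator_span_singleton _ _).mpr ?_
    rw [smul_eq_mul, ← mul_assoc, ← smul_eq_mul (a * b),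
      ← Submodule.mem_annihilator_span_singleton]
    exact hk (pow_succ J k ▸ Ideal.mul_mem_mul ha hb)

end

/-- Every zero-dimensional commutative ring has property (A). -/
theorem stmt_13 (R : Type*) [CommRing R]
    (hdim : ∀ p : Ideal R, p.IsPrime → p.IsMaximal) :
    HasPropertyA R := by
  have : Ring.KrullDimLE 0 R := .mk₀ hdim
  intro J hJ hzd
  obtain ⟨m, hm, hJm⟩ := J.exists_le_maximal fun h ↦ hzd 1 (h ▸ Submodule.mem_top) (one_mem _)
  obtain ⟨x, hxm, hJx⟩ :=
    hJ.exists_notMem_le_radical_annihilator m.mem_minimalPrimes_of_krullDimLE_zero hJm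
  obtain ⟨k, hk⟩ := Ideal.exists_pow_le_of_le_radical_of_fg hJx hJ
  exact Ideal.exists_ne_zero_forall_mul_eq_zero_of_pow_le_annihilator
    (ne_of_mem_of_not_mem m.zero_mem hxm).symm hk
end

section
/- Let K be a field, L/K a field extension such that k' ⊗_K L is an integral domain for every field extension k' of K (L/K regular), and R a Noetherian K-algebra. Set S = R ⊗_K L. Then for every zero-divisor h ∈ S there exists a nonzero r ∈ R with r·h = 0. -/
/-!
Replace `L` by a finitely generated subalgebra `L₀` containing the coefficients of `h` and of a
witness `s`, so that `S = R ⊗_K L₀` is Noetherian and free over `R`. Regularity makes `pS` prime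
for every prime `p` of `R`, since `S ⧸ pS ≅ (R ⧸ p) ⊗_K L₀` embeds into `Frac(R ⧸ p) ⊗_K L`.
Filtering a finite `R`-module `M` by quotients `R ⧸ p` and using flatness, every associated prime
of `S ⊗_R M` is then extended from `R`; for `M = R` this applies to an associated prime
`P = ann(y) ⊇ ann(s)` of `S`, which contains `h`. Writing `P = qS`, a nonzero coordinate `c` of
`y` in an `R`-basis of `S` is killed by `q`, hence `c` kills `qS ∋ h`.
-/

universe u v w

open scoped TensorProduct

section BaseChange

variable {R S : Type*} [CommRing R] [CommRing S] [Algebra R S]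

theorem exists_eq_map_of_mem_associatedPrimes_baseChange [IsNoetherianRing R]
    [IsNoetherianRing S] [Module.Flat R S]
    (hprime : ∀ p : Ideal R, p.IsPrime → (p.map (algebraMap R S)).IsPrime)
    (M : Type*) [AddCommGroup M] [Module R M] [Module.Finite R M] :
    ∀ P ∈ associatedPrimes S (S ⊗[R] M), ∃ q : Ideal R, P = q.map (algebraMap R S) := by
  induction ‹Module.Finite R M› using
    IsNoetherianRing.induction_on_isQuotientEquivQuotientPrime R with
  | subsingleton N => simp [associatedPrimes.eq_empty_of_subsingleton]
  | quotient N p e =>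
    have hp := hprime p.1 p.2
    rw [LinearEquiv.AssociatedPrimes.eq ((e.baseChange R S).trans
        (Algebra.TensorProduct.quotIdealMapEquivTensorQuot S p.1).symm.toLinearEquiv),
      associatedPrimes.eq_singleton_of_isPrimary hp.isPrimary, hp.radical]
    rintro P rfl
    exact ⟨p.1, rfl⟩
  | exact N₁ N₂ N₃ f g hf hg hfg ih₁ ih₃ =>
    intro P hP
    rcases associatedPrimes.subset_union_of_exact (f := f.baseChange S) (g := g.baseChange S)
      (Module.Flat.lTensor_preserves_injective_linearMap _ hf) (lTensor_exact S hfg hg) hP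
      with h | h
    exacts [ih₁ P h, ih₃ P h]

theorem exists_ne_zero_forall_smul_eq_zero_of_mem_map [Module.Free R S] {q : Ideal R} {y : S}
    (hy : y ≠ 0) (hqy : ∀ a ∈ q, a • y = 0) :
    ∃ c : R, c ≠ 0 ∧ ∀ h ∈ q.map (algebraMap R S), c • h = 0 := by
  set b := Module.Free.chooseBasis R S
  obtain ⟨i, hi⟩ : ∃ i, b.repr y i ≠ 0 := by
    by_contra! H
    exact hy (b.repr.map_eq_zero_iff.mp (Finsupp.ext H))
  refine ⟨b.repr y i, hi, fun h hh => ?_⟩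
  have hq : q.map (algebraMap R S) ≤ (⊥ : Ideal S).colon {algebraMap R S (b.repr y i)} := by
    rw [Ideal.map_le_iff_le_comap]
    intro a ha
    have : a * b.repr y i = 0 := by
      simpa using congrArg (fun z => b.repr z i) (hqy a ha)
    simp [Submodule.mem_colon_singleton, ← map_mul, this]
  simpa [Submodule.mem_colon_singleton, Algebra.smul_def, mul_comm] using hq hh

theorem exists_ne_zero_smul_eq_zero_of_mul_eq_zero [IsNoetherianRing R] [IsNoetherianRing S]
    [Module.Free R S] (hprime : ∀ p : Ideal R, p.IsPrime → (p.map (algebraMap R S)).IsPrime)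
    {h s : S} (hs : s ≠ 0) (hhs : h * s = 0) : ∃ r : R, r ≠ 0 ∧ r • h = 0 := by
  obtain ⟨P, hP, hle⟩ := exists_le_isAssociatedPrime_of_isNoetherianRing S s hs
  have hhP : h ∈ P := hle (by simpa [Submodule.mem_colon_singleton] using hhs)
  obtain ⟨q, rfl⟩ := exists_eq_map_of_mem_associatedPrimes_baseChange hprime R _
    (hP.map_of_injective _ (TensorProduct.AlgebraTensorModule.rid R S S).symm.injective)
  obtain ⟨hPprime, y, hy⟩ := isAssociatedPrime_iff.mp hP
  have hy0 : y ≠ 0 := by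
    rintro rfl
    exact hPprime.ne_top (by simp [hy])
  have hqy : ∀ a ∈ q, a • y = 0 := fun a ha => by
    simpa [hy, Submodule.mem_colon_singleton, Algebra.smul_def] using
      Ideal.mem_map_of_mem (algebraMap R S) ha
  obtain ⟨c, hc, hch⟩ := exists_ne_zero_forall_smul_eq_zero_of_mem_map hy0 hqy
  exact ⟨c, hc, hch h hhP⟩

end BaseChange

section TensorProduct

variable {K : Type*} [Field K]

theorem isPrime_map_algebraMap_of_isDomain {R A : Type*} [CommRing R] [Algebra K R]
    [CommRing A] [Algebra K A] (p : Ideal R) [IsDomain ((R ⧸ p) ⊗[K] A)] :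
    (p.map (algebraMap R (R ⊗[K] A))).IsPrime := by
  have hker := Algebra.TensorProduct.rTensor_ker (R := K) (S := K) (C := A)
    (Ideal.Quotient.mkₐ K p) (Ideal.Quotient.mkₐ_surjective K p)
  rw [show RingHom.ker (Ideal.Quotient.mkₐ K p) = p from Ideal.Quotient.mkₐ_ker K p] at hker
  exact hker ▸ RingHom.ker_isPrime _

theorem isDomain_tensorProduct_of_injective {A A' B B' : Type*} [CommRing A] [CommRing A']
    [CommRing B] [CommRing B'] [Algebra K A] [Algebra K A'] [Algebra K B] [Algebra K B']
    [IsDomain (A' ⊗[K] B')] (f : A →ₐ[K] A') (g : B →ₐ[K] B')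
    (hf : Function.Injective f) (hg : Function.Injective g) : IsDomain (A ⊗[K] B) :=
  Function.Injective.isDomain (Algebra.TensorProduct.map f g)
    (TensorProduct.map_injective_of_flat_flat f.toLinearMap g.toLinearMap hf hg)

theorem tensorProduct_map_id_val_injective (R : Type*) [CommRing R] [Algebra K R] {L : Type*}
    [CommRing L] [Algebra K L] (L₀ : Subalgebra K L) :
    Function.Injective (Algebra.TensorProduct.map (AlgHom.id R R) L₀.val) :=
  Module.Flat.lTensor_preserves_injective_linearMap (M := R) L₀.val.toLinearMap
    Subtype.val_injective

theorem exists_fg_subalgebra_subset_range (R : Type*) [CommRing R] [Algebra K R] {L : Type*}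
    [CommRing L] [Algebra K L] (t : Set (R ⊗[K] L)) (ht : t.Finite) :
    ∃ L₀ : Subalgebra K L, L₀.FG ∧
      t ⊆ Set.range (Algebra.TensorProduct.map (AlgHom.id R R) L₀.val) := by
  obtain ⟨N, hN, htN⟩ := TensorProduct.exists_finite_submodule_right_of_setFinite t ht
  obtain ⟨F, rfl⟩ := (Module.Finite.iff_fg.mp hN)
  refine ⟨Algebra.adjoin K (F : Set L), Subalgebra.fg_adjoin_finset F, fun z hz => ?_⟩
  obtain ⟨z, rfl⟩ := htN hz
  refine ⟨(Submodule.inclusion (Algebra.span_le_adjoin K (F : Set L))).lTensor R z, ?_⟩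
  change ((Algebra.adjoin K (F : Set L)).val.toLinearMap.lTensor R) _ = _
  rw [← LinearMap.comp_apply, ← LinearMap.lTensor_comp]
  rfl

end TensorProduct

open scoped TensorProduct in
/-- Let `L/K` be a regular field extension (i.e. `k' ⊗_K L` is a domain for every
field extension `k'` of `K`) and `R` a Noetherian `K`-algebra. Then every
zero-divisor of `S = R ⊗_K L` is annihilated by a nonzero element of `R`. -/
theorem stmt_15 (K : Type u) [Field K] (L : Type v) [Field L] [Algebra K L]
    (R : Type w) [CommRing R] [IsNoetherianRing R] [Algebra K R]
    (hreg : ∀ (k' : Type w) [Field k'] [Algebra K k'], IsDomain (k' ⊗[K] L)) :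
    ∀ h : R ⊗[K] L, (∃ s : R ⊗[K] L, s ≠ 0 ∧ h * s = 0) →
      ∃ r : R, r ≠ 0 ∧ r • h = 0 := by
  rintro h ⟨s, hs, hhs⟩
  obtain ⟨L₀, hL₀, hsub⟩ :=
    exists_fg_subalgebra_subset_range R ({h, s} : Set (R ⊗[K] L)) (by simp)
  obtain ⟨h₀, rfl⟩ := hsub (Set.mem_insert h {s})
  obtain ⟨s₀, rfl⟩ := hsub (Set.mem_insert_of_mem _ rfl)
  have : Algebra.FiniteType K L₀ := (Subalgebra.fg_iff_finiteType L₀).mp hL₀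
  have : IsNoetherianRing (R ⊗[K] L₀) := Algebra.FiniteType.isNoetherianRing R _
  have hprime (p : Ideal R) (hp : p.IsPrime) : (p.map (algebraMap R (R ⊗[K] L₀))).IsPrime := by
    have := hreg (FractionRing (R ⧸ p))
    have := isDomain_tensorProduct_of_injective
      (IsScalarTower.toAlgHom K (R ⧸ p) (FractionRing (R ⧸ p))) L₀.val
      (IsFractionRing.injective _ _) Subtype.val_injective
    exact isPrime_map_algebraMap_of_isDomain p
  have hι := tensorProduct_map_id_val_injective R L₀
  obtain ⟨r, hr, hrh⟩ := exists_ne_zero_smul_eq_zero_of_mul_eq_zero hprime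
    (h := h₀) (s := s₀) (by rintro rfl; simp at hs) (hι (by simpa using hhs))
  exact ⟨r, hr, by rw [← map_smul, hrh, map_zero]⟩
end

section
/- If R → S is an Ohm-Rush algebra and I is an ideal of R, then R/I → S/IS is Ohm-Rush, and the content of the image of f ∈ S in S/IS equals (c(f) + I)/I. -/
/-- If `R → S` is Ohm-Rush and `I` is an ideal of `R`, then `R/I → S/IS` is
Ohm-Rush, and the content of the image of `f ∈ S` in `S/IS` is `(c(f) + I)/I`. -/
theorem stmt_17 (R S : Type*) [CommRing R] [CommRing S] [Algebra R S]
    (hOR : IsOhmRush R S) (I : Ideal R) :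
    IsOhmRush (R ⧸ I) (S ⧸ I.map (algebraMap R S)) ∧
    ∀ f : S,
      orContent (R ⧸ I) (Ideal.Quotient.mk (I.map (algebraMap R S)) f) =
        (orContent R f).map (Ideal.Quotient.mk I) := by
  have comm : ∀ J : Ideal R,
      (J.map (Ideal.Quotient.mk I)).map
          (algebraMap (R ⧸ I) (S ⧸ I.map (algebraMap R S)))
        = (J.map (algebraMap R S)).map
            (Ideal.Quotient.mk (I.map (algebraMap R S))) := by
    intro J
    rw [Ideal.map_map, Ideal.map_map]
    exact congrArg (Ideal.map · J) (RingHom.ext fun r => rfl)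
  have key : ∀ (J : Ideal R), I ≤ J → ∀ f : S,
      (Ideal.Quotient.mk (I.map (algebraMap R S)) f ∈
        (J.map (Ideal.Quotient.mk I)).map
          (algebraMap (R ⧸ I) (S ⧸ I.map (algebraMap R S))))
        ↔ f ∈ J.map (algebraMap R S) := by
    intro J hIJ f
    rw [comm, Ideal.mem_quotient_iff_mem_sup,
      sup_eq_left.mpr (Ideal.map_mono hIJ)]
  have hc : ∀ f : S,
      orContent (R ⧸ I) (Ideal.Quotient.mk (I.map (algebraMap R S)) f)
        = (orContent R f).map (Ideal.Quotient.mk I) := by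
    intro f
    apply le_antisymm
    · apply sInf_le
      simp only [Set.mem_setOf_eq, comm]
      exact Ideal.mem_map_of_mem _ (hOR f)
    · apply le_sInf
      intro Jbar hJbar
      have hsurj : Function.Surjective (Ideal.Quotient.mk I) :=
        Ideal.Quotient.mk_surjective
      have hJ : Jbar = (Jbar.comap (Ideal.Quotient.mk I)).map (Ideal.Quotient.mk I) :=
        (Ideal.map_comap_of_surjective _ hsurj Jbar).symm
      have hIle : I ≤ Jbar.comap (Ideal.Quotient.mk I) := by
        intro x hx
        show Ideal.Quotient.mk I x ∈ Jbar
        rw [Ideal.Quotient.eq_zero_iff_mem.mpr hx]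
        exact Jbar.zero_mem
      rw [hJ] at hJbar ⊢
      exact Ideal.map_mono (sInf_le ((key _ hIle f).mp hJbar))
  refine ⟨?_, hc⟩
  intro g
  obtain ⟨f, rfl⟩ := Ideal.Quotient.mk_surjective g
  rw [hc f, comm]
  exact Ideal.mem_map_of_mem _ (hOR f)
end

section
/- Let R → S be a flat Ohm-Rush algebra. Then for every r ∈ R and f ∈ S, c(rf) = r·c(f). -/
open TensorProduct in
lemma flat_colon_key {R S : Type*} [CommRing R] [CommRing S] [Algebra R S]
    [Module.Flat R S] (J : Ideal R) (r : R) (g : S)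
    (h : algebraMap R S r * g ∈ J.map (algebraMap R S)) :
    g ∈ (J.colon (Ideal.span {r})).map (algebraMap R S) := by
  set K := J.colon (Ideal.span {r}) with hK
  have hle : (K : Submodule R R) ≤
      Submodule.comap (LinearMap.lsmul R R r) (J : Submodule R R) := by
    intro x hx
    simp only [Submodule.mem_comap, LinearMap.lsmul_apply, smul_eq_mul]
    rw [mul_comm]
    exact Ideal.mem_colon_span_singleton.mp hx
  set φ : (R ⧸ K) →ₗ[R] (R ⧸ J) := Submodule.mapQ _ _ (LinearMap.lsmul R R r) hle with hφ
  have hinj : Function.Injective φ := by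
    rw [← LinearMap.ker_eq_bot, eq_bot_iff]
    rintro x hx
    obtain ⟨a, rfl⟩ := Submodule.Quotient.mk_surjective _ x
    have h0 : φ (Submodule.Quotient.mk a) = 0 := hx
    rw [hφ, Submodule.mapQ_apply] at h0
    have hra : r * a ∈ J := by
      rw [← Submodule.Quotient.mk_eq_zero J]
      simpa [Submodule.Quotient.mk_smul] using h0
    simp only [Submodule.mem_bot, Submodule.Quotient.mk_eq_zero]
    exact Ideal.mem_colon_span_singleton.mpr (by rwa [mul_comm])
  have hinj2 : Function.Injective (φ.rTensor S) :=
    Module.Flat.rTensor_preserves_injective_linearMap φ hinj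
  have hmem : r • g ∈ (J • (⊤ : Submodule R S)) := by
    rw [Ideal.smul_top_eq_map]
    simpa [Algebra.smul_def] using h
  have key : (quotTensorEquivQuotSMul S J) ((φ.rTensor S)
      ((quotTensorEquivQuotSMul S K).symm (Submodule.Quotient.mk g))) =
      Submodule.Quotient.mk (r • g) := by
    rw [quotTensorEquivQuotSMul_symm_mk]
    have h1 : (φ.rTensor S) ((1 : R ⧸ K) ⊗ₜ[R] g) = (Ideal.Quotient.mk J r) ⊗ₜ[R] g := by
      have : φ (1 : R ⧸ K) = Ideal.Quotient.mk J r := by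
        show φ (Submodule.Quotient.mk 1) = _
        rw [hφ, Submodule.mapQ_apply]
        simp
      simp [LinearMap.rTensor_tmul, this]
    rw [h1, quotTensorEquivQuotSMul_mk_tmul]
  have h2 : (quotTensorEquivQuotSMul S K).symm (Submodule.Quotient.mk g) = 0 := by
    apply hinj2
    apply (quotTensorEquivQuotSMul S J).injective
    rw [key]
    simp only [map_zero]
    rwa [Submodule.Quotient.mk_eq_zero]
  have h3 : (Submodule.Quotient.mk g : S ⧸ (K • (⊤ : Submodule R S))) = 0 := by
    apply (quotTensorEquivQuotSMul S K).symm.injective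
    simpa using h2
  rw [Submodule.Quotient.mk_eq_zero, Ideal.smul_top_eq_map] at h3
  exact h3

/-- If `R → S` is a flat Ohm-Rush algebra, then `c(r·f) = r·c(f)` for every
`r ∈ R` and `f ∈ S`. -/
theorem stmt_18 (R S : Type*) [CommRing R] [CommRing S] [Algebra R S]
    [Module.Flat R S] (hOR : IsOhmRush R S) :
    ∀ (r : R) (f : S),
      orContent R (algebraMap R S r * f) = Ideal.span {r} * orContent R f := by
  intro r f
  apply le_antisymm
  · -- c(rf) ≤ (r) * c(f)
    apply sInf_le
    show algebraMap R S r * f ∈ (Ideal.span {r} * orContent R f).map (algebraMap R S)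
    rw [Ideal.map_mul]
    exact Ideal.mul_mem_mul
      (Ideal.mem_map_of_mem _ (Ideal.subset_span rfl)) (hOR f)
  · -- (r) * c(f) ≤ c(rf)
    have hK : orContent R f ≤ (orContent R (algebraMap R S r * f)).colon (Ideal.span {r}) :=
      sInf_le (flat_colon_key _ r f (hOR (algebraMap R S r * f)))
    rw [Ideal.mul_le]
    intro a ha b hb
    obtain ⟨t, rfl⟩ := Ideal.mem_span_singleton'.mp ha
    have : b * r ∈ orContent R (algebraMap R S r * f) :=
      Ideal.mem_colon_span_singleton.mp (hK hb)
    have := Ideal.mul_mem_left _ t this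
    rwa [show t * (b * r) = t * r * b by ring] at this
end
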